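/- arXiv:2106.14702 — 3 statements merged into one kernel-verified Lean document; each statement's English description precedes it below -/
import Mathlib

section
/- In the adversarial classification game, if (α*, β*) is a Bayesian Nash equilibrium, then β* maximizes over defender strategies β the minimum over attacker strategies α of the defender's expected utility Σᵢ pᵢ Uᵢᴰ(α, β). -/
open Finset

/-- Pure attacker utility against classifier `c` when playing vector `v`. -/
def pureUA {V : Type*} {m : ℕ} (Uu Ud : Fin m → V → ℝ) (i : Fin m) (v : V)
    (c : V → Bool) : ℝ :=
  if c v then -(Ud i v) else Uu i v

/-- Mixed attacker utility of type `i`. -/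
noncomputable def mixedUA {V : Type*} [Fintype V] [DecidableEq V] {m : ℕ}
    (Uu Ud : Fin m → V → ℝ) (α : Fin m → V → ℝ) (β : (V → Bool) → ℝ) (i : Fin m) : ℝ :=
  ∑ v, ∑ c : V → Bool, α i v * β c * pureUA Uu Ud i v c

/-- Expected false alarm cost under mixed defender strategy `β`. -/
noncomputable def falseAlarm {V : Type*} [Fintype V] [DecidableEq V]
    (cfa P0 : V → ℝ) (β : (V → Bool) → ℝ) : ℝ :=
  ∑ c : V → Bool, β c * ∑ v, cfa v * P0 v * (if c v then 1 else 0)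

/-- Mixed defender utility facing a type `i` attacker. -/
noncomputable def mixedUD {V : Type*} [Fintype V] [DecidableEq V] {m : ℕ}
    (Uu Ud : Fin m → V → ℝ) (cfa P0 : V → ℝ) (pa : ℝ)
    (α : Fin m → V → ℝ) (β : (V → Bool) → ℝ) (i : Fin m) : ℝ :=
  -pa * mixedUA Uu Ud α β i - (1 - pa) * falseAlarm cfa P0 β

/-- `α` is a valid attacker mixed strategy: a distribution on `V` for each type. -/
def IsAttStrat {V : Type*} [Fintype V] {m : ℕ} (α : Fin m → V → ℝ) : Prop :=
  ∀ i, (∀ v, 0 ≤ α i v) ∧ ∑ v, α i v = 1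

/-- `β` is a valid defender mixed strategy: a distribution on classifiers. -/
def IsDefStrat {V : Type*} [Fintype V] [DecidableEq V] (β : (V → Bool) → ℝ) : Prop :=
  (∀ c, 0 ≤ β c) ∧ ∑ c : V → Bool, β c = 1

/-!
Let `αbr` be a best response of the attacker to `β`. For a fixed defender strategy the false-alarm
term does not depend on `α`, so the defender's expected utility is `-pa` times the attacker's plus
a constant: the game is zero-sum in `α`. Hence
`U_D(αbr, β) ≤ U_D(α*, β) ≤ U_D(α*, β*) ≤ U_D(α', β*)`, the middle step being the defender's
equilibrium condition and the outer ones the attacker's optimality of `αbr` and `α*`.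
-/

section

variable {V : Type*} [Fintype V] [DecidableEq V] {m : ℕ} (Uu Ud : Fin m → V → ℝ)

noncomputable def vectorUA (β : (V → Bool) → ℝ) (i : Fin m) (v : V) : ℝ :=
  ∑ c : V → Bool, β c * pureUA Uu Ud i v c

def pureAttStrat (w : Fin m → V) : Fin m → V → ℝ :=
  fun i => Pi.single (w i) 1

lemma mixedUA_eq_sum (α : Fin m → V → ℝ) (β : (V → Bool) → ℝ) (i : Fin m) :
    mixedUA Uu Ud α β i = ∑ v, α i v * vectorUA Uu Ud β i v := by
  simp only [mixedUA, vectorUA, mul_sum, mul_assoc]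

lemma isAttStrat_pureAttStrat (w : Fin m → V) : IsAttStrat (pureAttStrat w) :=
  fun i => ⟨fun v => by simp [pureAttStrat, Pi.single_apply, apply_ite], by simp [pureAttStrat]⟩

lemma mixedUA_pureAttStrat (w : Fin m → V) (β : (V → Bool) → ℝ) (i : Fin m) :
    mixedUA Uu Ud (pureAttStrat w) β i = vectorUA Uu Ud β i (w i) := by
  simp [mixedUA_eq_sum, pureAttStrat, Pi.single_apply]

lemma mixedUA_le_of_forall_vectorUA_le {α : Fin m → V → ℝ} (hα : IsAttStrat α)
    {β : (V → Bool) → ℝ} {i : Fin m} {u : ℝ} (hu : ∀ v, vectorUA Uu Ud β i v ≤ u) :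
    mixedUA Uu Ud α β i ≤ u :=
  calc mixedUA Uu Ud α β i ≤ ∑ v, α i v * u := by
        rw [mixedUA_eq_sum]
        exact sum_le_sum fun v _ => mul_le_mul_of_nonneg_left (hu v) ((hα i).1 v)
    _ = u := by rw [← sum_mul, (hα i).2, one_mul]

/-- The best response is pure: each type plays a maximizer of its `vectorUA`. -/
lemma exists_isAttStrat_bestResponse {α₀ : Fin m → V → ℝ} (hα₀ : IsAttStrat α₀)
    (β : (V → Bool) → ℝ) :
    ∃ αbr, IsAttStrat αbr ∧
      ∀ α, IsAttStrat α → ∀ i, mixedUA Uu Ud α β i ≤ mixedUA Uu Ud αbr β i := by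
  have hmax : ∀ i, ∃ w, ∀ v, vectorUA Uu Ud β i v ≤ vectorUA Uu Ud β i w := by
    intro i
    have : Nonempty V :=
      univ_nonempty_iff.mp <| nonempty_of_sum_ne_zero <| (hα₀ i).2.symm ▸ one_ne_zero
    exact Finite.exists_max (vectorUA Uu Ud β i)
  choose w hw using hmax
  refine ⟨pureAttStrat w, isAttStrat_pureAttStrat w, fun α hα i => ?_⟩
  rw [mixedUA_pureAttStrat]
  exact mixedUA_le_of_forall_vectorUA_le Uu Ud hα (hw i)

variable (cfa P0 : V → ℝ) (pa : ℝ) (p : Fin m → ℝ)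

lemma sum_mul_mixedUD (α : Fin m → V → ℝ) (β : (V → Bool) → ℝ) :
    ∑ i, p i * mixedUD Uu Ud cfa P0 pa α β i
      = -pa * ∑ i, p i * mixedUA Uu Ud α β i
          - (1 - pa) * falseAlarm cfa P0 β * ∑ i, p i := by
  simp only [mixedUD, mul_sum, ← sum_sub_distrib]
  exact sum_congr rfl fun i _ => by ring

lemma sum_mul_mixedUD_antitone (hpa : 0 ≤ pa) {α₁ α₂ : Fin m → V → ℝ} {β : (V → Bool) → ℝ}
    (h : ∑ i, p i * mixedUA Uu Ud α₁ β i ≤ ∑ i, p i * mixedUA Uu Ud α₂ β i) :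
    ∑ i, p i * mixedUD Uu Ud cfa P0 pa α₂ β i
      ≤ ∑ i, p i * mixedUD Uu Ud cfa P0 pa α₁ β i := by
  rw [sum_mul_mixedUD, sum_mul_mixedUD]
  linarith [mul_le_mul_of_nonneg_left h hpa]

end

theorem bne_defender_is_minmax_general {V : Type*} [Fintype V] [DecidableEq V] {m : ℕ}
    (Uu Ud : Fin m → V → ℝ)
    (p : Fin m → ℝ) (hp0 : ∀ i, 0 ≤ p i)
    (pa : ℝ) (hpa0 : 0 < pa)
    (P0 : V → ℝ)
    (cfa : V → ℝ)
    (αs : Fin m → V → ℝ) (βs : (V → Bool) → ℝ)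
    (hαs : IsAttStrat αs)
    (hBNE_D : ∀ β, IsDefStrat β →
      ∑ i, p i * mixedUD Uu Ud cfa P0 pa αs β i
        ≤ ∑ i, p i * mixedUD Uu Ud cfa P0 pa αs βs i)
    (hBNE_A : ∀ α, IsAttStrat α →
      ∑ i, p i * mixedUA Uu Ud α βs i ≤ ∑ i, p i * mixedUA Uu Ud αs βs i) :
    ∀ β, IsDefStrat β → ∃ α, IsAttStrat α ∧
      ∀ α', IsAttStrat α' →
        ∑ i, p i * mixedUD Uu Ud cfa P0 pa α β i
          ≤ ∑ i, p i * mixedUD Uu Ud cfa P0 pa α' βs i := by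
  intro β hβ
  obtain ⟨αbr, hαbr, hbest⟩ := exists_isAttStrat_bestResponse Uu Ud hαs β
  refine ⟨αbr, hαbr, fun α' hα' => ?_⟩
  calc ∑ i, p i * mixedUD Uu Ud cfa P0 pa αbr β i
      ≤ ∑ i, p i * mixedUD Uu Ud cfa P0 pa αs β i :=
        sum_mul_mixedUD_antitone Uu Ud cfa P0 pa p hpa0.le <|
          sum_le_sum fun i _ => mul_le_mul_of_nonneg_left (hbest αs hαs i) (hp0 i)
    _ ≤ ∑ i, p i * mixedUD Uu Ud cfa P0 pa αs βs i := hBNE_D β hβ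
    _ ≤ ∑ i, p i * mixedUD Uu Ud cfa P0 pa α' βs i :=
        sum_mul_mixedUD_antitone Uu Ud cfa P0 pa p hpa0.le (hBNE_A α' hα')

/-- At any Bayesian Nash equilibrium `(α*, β*)`, the defender strategy `β*`
maximizes over `β` the minimum over `α` of the defender's expected utility. -/
theorem bne_defender_is_minmax {V : Type*} [Fintype V] [DecidableEq V] {m : ℕ}
    (Uu Ud : Fin m → V → ℝ)
    (p : Fin m → ℝ) (hp0 : ∀ i, 0 ≤ p i) (hp1 : ∑ i, p i = 1)
    (pa : ℝ) (hpa0 : 0 < pa) (hpa1 : pa < 1)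
    (P0 : V → ℝ) (hP00 : ∀ v, 0 ≤ P0 v) (hP01 : ∑ v, P0 v = 1)
    (cfa : V → ℝ) (hcfa : ∀ v, 0 ≤ cfa v)
    (αs : Fin m → V → ℝ) (βs : (V → Bool) → ℝ)
    (hαs : IsAttStrat αs) (hβs : IsDefStrat βs)
    (hBNE_D : ∀ β, IsDefStrat β →
      ∑ i, p i * mixedUD Uu Ud cfa P0 pa αs β i
        ≤ ∑ i, p i * mixedUD Uu Ud cfa P0 pa αs βs i)
    (hBNE_A : ∀ α, IsAttStrat α →
      ∑ i, p i * mixedUA Uu Ud α βs i ≤ ∑ i, p i * mixedUA Uu Ud αs βs i) :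
    ∀ β, IsDefStrat β → ∃ α, IsAttStrat α ∧
      ∀ α', IsAttStrat α' →
        ∑ i, p i * mixedUD Uu Ud cfa P0 pa α β i
          ≤ ∑ i, p i * mixedUD Uu Ud cfa P0 pa α' βs i :=
  bne_defender_is_minmax_general Uu Ud p hp0 pa hpa0 P0 cfa αs βs hαs hBNE_D hBNE_A
end

section
/- Let G ∈ [G̲₁, Ḡ₁]×…×[G̲ₘ, Ḡₘ]. Then the minimum over attacker strategies α of the defender's utility when using detection function π_G satisfies min_α Σᵢ pᵢ Uᵢᴰ(α, π_G) ≥ U^D(G), where U^D(G) = −pₐΣᵢ pᵢGᵢ − (1−pₐ)Σ_v c_fa(v)P₀(v)π_G(v). -/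
open Finset

/-- The optimal probability of detection associated with utility profile `G`. -/
noncomputable def piG {V : Type*} [Fintype V] {m : ℕ} (Uu Ud : Fin m → V → ℝ)
    (G : Fin m → ℝ) (v : V) : ℝ :=
  max 0 (⨆ i, (Uu i v - G i) / (Uu i v + Ud i v))

/-- The minimum possible attacker gain `G̲ᵢ = max_v (−Uᵢᵈ(v))`. -/
noncomputable def Glo {V : Type*} [Fintype V] {m : ℕ} (Ud : Fin m → V → ℝ)
    (i : Fin m) : ℝ :=
  ⨆ v, -(Ud i v)

/-- The maximum possible attacker gain `Ḡᵢ = max_v Uᵢᵘ(v)`. -/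
noncomputable def Ghi {V : Type*} [Fintype V] {m : ℕ} (Uu : Fin m → V → ℝ)
    (i : Fin m) : ℝ :=
  ⨆ v, Uu i v

/-- Attacker type `i`'s expected utility against detection function `π`. -/
noncomputable def UApi {V : Type*} [Fintype V] {m : ℕ} (Uu Ud : Fin m → V → ℝ)
    (α : Fin m → V → ℝ) (π : V → ℝ) (i : Fin m) : ℝ :=
  ∑ v, α i v * (Uu i v - π v * (Uu i v + Ud i v))

/-- Defender's expected utility facing a type `i` attacker, with detection function `π`. -/
noncomputable def UDpi {V : Type*} [Fintype V] {m : ℕ} (Uu Ud : Fin m → V → ℝ)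
    (cfa P0 : V → ℝ) (pa : ℝ) (α : Fin m → V → ℝ) (π : V → ℝ) (i : Fin m) : ℝ :=
  -pa * UApi Uu Ud α π i - (1 - pa) * ∑ v, cfa v * P0 v * π v

/-- The minimum gain function `U^D(G)`. -/
noncomputable def UDfun {V : Type*} [Fintype V] {m : ℕ} (Uu Ud : Fin m → V → ℝ)
    (cfa P0 : V → ℝ) (pa : ℝ) (p : Fin m → ℝ) (G : Fin m → ℝ) : ℝ :=
  -pa * ∑ i, p i * G i - (1 - pa) * ∑ v, cfa v * P0 v * piG Uu Ud G v

/-!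
By construction `π_G(v) ≥ (Uᵢᵘ(v) − Gᵢ)/(Uᵢᵘ(v) + Uᵢᵈ(v))`, so against `π_G` every attacker type `i`
gains at most `Gᵢ` at every target, hence at most `Gᵢ` under any mixed strategy. The false-alarm
cost does not depend on the attacker, so it is the same on both sides.
-/

section
variable {V : Type*} [Fintype V] {m : ℕ} (Uu Ud : Fin m → V → ℝ)

lemma div_le_piG (G : Fin m → ℝ) (i : Fin m) (v : V) :
    (Uu i v - G i) / (Uu i v + Ud i v) ≤ piG Uu Ud G v :=
  (le_ciSup (f := fun j => (Uu j v - G j) / (Uu j v + Ud j v))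
    (Set.finite_range _).bddAbove i).trans (le_max_right _ _)

lemma sub_piG_mul_le {G : Fin m → ℝ} {i : Fin m} {v : V} (hs : 0 < Uu i v + Ud i v) :
    Uu i v - piG Uu Ud G v * (Uu i v + Ud i v) ≤ G i := by
  have h := div_le_piG Uu Ud G i v
  rw [div_le_iff₀ hs] at h
  linarith

lemma UApi_le_of_forall_le {α : Fin m → V → ℝ} {π : V → ℝ} {i : Fin m} {g : ℝ}
    (hα : IsAttStrat α) (h : ∀ v, Uu i v - π v * (Uu i v + Ud i v) ≤ g) :
    UApi Uu Ud α π i ≤ g :=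
  calc UApi Uu Ud α π i ≤ ∑ v, α i v * g :=
        sum_le_sum fun v _ => mul_le_mul_of_nonneg_left (h v) ((hα i).1 v)
    _ = g := by rw [← sum_mul, (hα i).2, one_mul]

lemma UApi_piG_le {α : Fin m → V → ℝ} (hα : IsAttStrat α) {G : Fin m → ℝ}
    (hs : ∀ i v, 0 < Uu i v + Ud i v) (i : Fin m) :
    UApi Uu Ud α (piG Uu Ud G) i ≤ G i :=
  UApi_le_of_forall_le Uu Ud hα fun v => sub_piG_mul_le Uu Ud (hs i v)

lemma sum_mul_UDpi (cfa P0 : V → ℝ) (pa : ℝ) {p : Fin m → ℝ} (hp1 : ∑ i, p i = 1)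
    (α : Fin m → V → ℝ) (π : V → ℝ) :
    ∑ i, p i * UDpi Uu Ud cfa P0 pa α π i
      = -pa * ∑ i, p i * UApi Uu Ud α π i - (1 - pa) * ∑ v, cfa v * P0 v * π v := by
  simp only [UDpi, mul_sub, sum_sub_distrib, mul_left_comm (p _), ← mul_sum, ← sum_mul, hp1,
    one_mul]

end

theorem min_defender_utility_ge_UDfun_general {V : Type*} [Fintype V] {m : ℕ}
    (Uu Ud : Fin m → V → ℝ) (hs : ∀ i v, 0 < Uu i v + Ud i v)
    (cfa : V → ℝ)
    (P0 : V → ℝ)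
    (pa : ℝ) (hpa0 : 0 < pa)
    (p : Fin m → ℝ) (hp0 : ∀ i, 0 ≤ p i) (hp1 : ∑ i, p i = 1)
    (G : Fin m → ℝ) :
    ∀ α, IsAttStrat α →
      UDfun Uu Ud cfa P0 pa p G
        ≤ ∑ i, p i * UDpi Uu Ud cfa P0 pa α (piG Uu Ud G) i := by
  intro α hα
  have hUA : ∑ i, p i * UApi Uu Ud α (piG Uu Ud G) i ≤ ∑ i, p i * G i :=
    sum_le_sum fun i _ => mul_le_mul_of_nonneg_left (UApi_piG_le Uu Ud hα hs i) (hp0 i)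
  rw [sum_mul_UDpi Uu Ud cfa P0 pa hp1, UDfun]
  linarith [mul_le_mul_of_nonneg_left hUA hpa0.le]

/-- for `G` in the box, the minimum over attacker strategies of the
defender's utility when using detection function `π_G` is at least `U^D(G)`. -/
theorem min_defender_utility_ge_UDfun {V : Type*} [Fintype V] [Nonempty V] {m : ℕ}
    (Uu Ud : Fin m → V → ℝ) (hs : ∀ i v, 0 < Uu i v + Ud i v)
    (cfa : V → ℝ) (hcfa : ∀ v, 0 ≤ cfa v)
    (P0 : V → ℝ) (hP00 : ∀ v, 0 ≤ P0 v) (hP01 : ∑ v, P0 v = 1)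
    (pa : ℝ) (hpa0 : 0 < pa) (hpa1 : pa < 1)
    (p : Fin m → ℝ) (hp0 : ∀ i, 0 ≤ p i) (hp1 : ∑ i, p i = 1)
    (G : Fin m → ℝ) (hG : ∀ i, G i ∈ Set.Icc (Glo Ud i) (Ghi Uu i)) :
    ∀ α, IsAttStrat α →
      UDfun Uu Ud cfa P0 pa p G
        ≤ ∑ i, p i * UDpi Uu Ud cfa P0 pa α (piG Uu Ud G) i :=
  min_defender_utility_ge_UDfun_general Uu Ud hs cfa P0 pa hpa0 p hp0 hp1 G
end

section
/- If (α*, β*) is a Bayesian Nash equilibrium and π* = π^{β*} is the induced detection probability, then for every v ∈ V with 0 < π*(v) < 1, the equilibrium attacker strategy satisfies Σᵢ pᵢ α*ⁱ_v (Uᵢᵘ(v) + Uᵢᵈ(v)) = ((1−pₐ)/pₐ)·c_fa(v)·P₀(v); for v with π*(v) = 0 the left side is ≤ the right side; and for v with π*(v) = 1 the left side is ≥ the right side. -/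
open Finset

/-!
The defender's expected utility is affine in the detection function: the coefficient of `π v`
is `pₐ · Σᵢ pᵢ α*ⁱ_v (Uᵢᵘ(v) + Uᵢᵈ(v)) − (1 − pₐ) c_fa(v) P₀(v)`. Since `π*` maximizes it over the
cube `[0,1]^V`, moving the single coordinate `π*(v)` down to `0` or up to `1` cannot help, so
this coefficient is `≥ 0` where `π*(v) > 0` and `≤ 0` where `π*(v) < 1`. Dividing by `pₐ > 0`
gives the three cases.
-/

section LinearMaximization

variable {ι : Type*} [Fintype ι] {c x : ι → ℝ}

theorem sum_mul_update_eq [DecidableEq ι] (c x : ι → ℝ) (i : ι) (t : ℝ) :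
    ∑ j, c j * Function.update x i t j = ∑ j, c j * x j + c i * (t - x i) := by
  rw [← sub_eq_iff_eq_add', ← Finset.sum_sub_distrib,
    Finset.sum_eq_single i (fun j _ hji => by simp [Function.update_of_ne hji]) (by simp)]
  simp [mul_sub]

theorem mul_sub_nonpos_of_isMaxOn_unitCube
    (hx : x ∈ Set.univ.pi fun _ => Set.Icc (0 : ℝ) 1)
    (hmax : IsMaxOn (fun y => ∑ j, c j * y j) (Set.univ.pi fun _ => Set.Icc (0 : ℝ) 1) x)
    (i : ι) {t : ℝ} (ht : t ∈ Set.Icc (0 : ℝ) 1) : c i * (t - x i) ≤ 0 := by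
  classical
  have hy : Function.update x i t ∈ Set.univ.pi fun _ => Set.Icc (0 : ℝ) 1 :=
    (Set.update_mem_pi_iff_of_mem hx).2 fun _ => ht
  have := hmax hy
  simp only [Set.mem_ofPred_eq, sum_mul_update_eq] at this
  linarith

theorem nonneg_of_isMaxOn_unitCube
    (hx : x ∈ Set.univ.pi fun _ => Set.Icc (0 : ℝ) 1)
    (hmax : IsMaxOn (fun y => ∑ j, c j * y j) (Set.univ.pi fun _ => Set.Icc (0 : ℝ) 1) x)
    {i : ι} (hpos : 0 < x i) : 0 ≤ c i := by
  have := mul_sub_nonpos_of_isMaxOn_unitCube hx hmax i (t := 0) ⟨le_rfl, zero_le_one⟩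
  nlinarith

theorem nonpos_of_isMaxOn_unitCube
    (hx : x ∈ Set.univ.pi fun _ => Set.Icc (0 : ℝ) 1)
    (hmax : IsMaxOn (fun y => ∑ j, c j * y j) (Set.univ.pi fun _ => Set.Icc (0 : ℝ) 1) x)
    {i : ι} (hlt : x i < 1) : c i ≤ 0 := by
  have := mul_sub_nonpos_of_isMaxOn_unitCube hx hmax i (t := 1) ⟨zero_le_one, le_rfl⟩
  nlinarith

end LinearMaximization

section DefenderObjective

variable {V : Type*} {m : ℕ} {Uu Ud : Fin m → V → ℝ} {cfa P0 : V → ℝ} {pa : ℝ}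
  {p : Fin m → ℝ} {α : Fin m → V → ℝ}

noncomputable def detectionMarginalValue (Uu Ud : Fin m → V → ℝ) (cfa P0 : V → ℝ) (pa : ℝ)
    (p : Fin m → ℝ) (α : Fin m → V → ℝ) (v : V) : ℝ :=
  pa * ∑ i, p i * α i v * (Uu i v + Ud i v) - (1 - pa) * (cfa v * P0 v)

theorem sum_mul_UDpi_eq [Fintype V] (hp1 : ∑ i, p i = 1) (π : V → ℝ) :
    ∑ i, p i * UDpi Uu Ud cfa P0 pa α π i =
      -pa * ∑ i, p i * ∑ v, α i v * Uu i v +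
        ∑ v, detectionMarginalValue Uu Ud cfa P0 pa p α v * π v := by
  have hA : ∀ i, UApi Uu Ud α π i =
      ∑ v, α i v * Uu i v - ∑ v, α i v * (Uu i v + Ud i v) * π v := fun i => by
    rw [UApi, ← Finset.sum_sub_distrib]
    exact Finset.sum_congr rfl fun v _ => by ring
  have hswap : ∑ i, p i * ∑ v, α i v * (Uu i v + Ud i v) * π v =
      ∑ v, (∑ i, p i * α i v * (Uu i v + Ud i v)) * π v := by
    simp only [Finset.mul_sum, Finset.sum_mul, mul_assoc]
    exact Finset.sum_comm
  calc ∑ i, p i * UDpi Uu Ud cfa P0 pa α π i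
      = ∑ i, (-pa * (p i * ∑ v, α i v * Uu i v)
          + pa * (p i * ∑ v, α i v * (Uu i v + Ud i v) * π v)
          - (1 - pa) * (∑ v, cfa v * P0 v * π v) * p i) :=
        Finset.sum_congr rfl fun i _ => by rw [UDpi, hA]; ring
    _ = _ := by
        rw [Finset.sum_sub_distrib, Finset.sum_add_distrib, ← Finset.mul_sum, ← Finset.mul_sum,
          ← Finset.mul_sum, hp1, hswap]
        simp only [detectionMarginalValue, sub_mul, Finset.sum_sub_distrib, mul_assoc,
          ← Finset.mul_sum]
        ring

theorem detectionMarginalValue_eq_mul_sub (hpa : pa ≠ 0) (v : V) :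
    detectionMarginalValue Uu Ud cfa P0 pa p α v =
      (∑ i, p i * α i v * (Uu i v + Ud i v) - (1 - pa) / pa * (cfa v * P0 v)) * pa := by
  rw [detectionMarginalValue]
  field_simp

end DefenderObjective

theorem bne_attacker_first_order_general {V : Type*} [Fintype V] {m : ℕ}
    (Uu Ud : Fin m → V → ℝ)
    (cfa : V → ℝ)
    (P0 : V → ℝ)
    (pa : ℝ) (hpa0 : 0 < pa)
    (p : Fin m → ℝ) (hp1 : ∑ i, p i = 1)
    (αs : Fin m → V → ℝ)
    (πs : V → ℝ) (hπs : ∀ v, πs v ∈ Set.Icc (0 : ℝ) 1)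
    -- BNE: `π*` maximizes the defender's expected utility against `α*` ...
    (hBNE_D : ∀ π : V → ℝ, (∀ v, π v ∈ Set.Icc (0 : ℝ) 1) →
      ∑ i, p i * UDpi Uu Ud cfa P0 pa αs π i ≤ ∑ i, p i * UDpi Uu Ud cfa P0 pa αs πs i) :
    ∀ v : V,
      (0 < πs v → πs v < 1 →
        ∑ i, p i * αs i v * (Uu i v + Ud i v) = (1 - pa) / pa * (cfa v * P0 v))
      ∧ (πs v = 0 →
        ∑ i, p i * αs i v * (Uu i v + Ud i v) ≤ (1 - pa) / pa * (cfa v * P0 v))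
      ∧ (πs v = 1 →
        (1 - pa) / pa * (cfa v * P0 v) ≤ ∑ i, p i * αs i v * (Uu i v + Ud i v)) := by
  have hx : πs ∈ Set.univ.pi fun _ => Set.Icc (0 : ℝ) 1 := Set.mem_univ_pi.2 hπs
  have hmax : IsMaxOn (fun π => ∑ v, detectionMarginalValue Uu Ud cfa P0 pa p αs v * π v)
      (Set.univ.pi fun _ => Set.Icc (0 : ℝ) 1) πs := fun π hπ => by
    have := hBNE_D π (Set.mem_univ_pi.1 hπ)
    rwa [sum_mul_UDpi_eq hp1, sum_mul_UDpi_eq hp1, add_le_add_iff_left] at this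
  intro v
  refine ⟨fun h0 h1 => ?_, fun h0 => ?_, fun h1 => ?_⟩
  · have hzero := le_antisymm (nonpos_of_isMaxOn_unitCube hx hmax h1)
      (nonneg_of_isMaxOn_unitCube hx hmax h0)
    rw [detectionMarginalValue_eq_mul_sub hpa0.ne', mul_eq_zero, sub_eq_zero] at hzero
    exact hzero.resolve_right hpa0.ne'
  · have hnonpos := nonpos_of_isMaxOn_unitCube hx hmax (h0 ▸ zero_lt_one)
    rw [detectionMarginalValue_eq_mul_sub hpa0.ne'] at hnonpos
    exact sub_nonpos.1 (nonpos_of_mul_nonpos_left hnonpos hpa0)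
  · have hnonneg := nonneg_of_isMaxOn_unitCube hx hmax (h1 ▸ zero_lt_one)
    rw [detectionMarginalValue_eq_mul_sub hpa0.ne'] at hnonneg
    exact sub_nonneg.1 (nonneg_of_mul_nonneg_left hnonneg hpa0)

/-- first-order equilibrium conditions on the attacker's strategy. At a BNE
with induced detection probability `π*`, for each vector `v` the weighted attacker mass
`Σᵢ pᵢ α*ⁱ_v (Uᵢᵘ(v)+Uᵢᵈ(v))` equals `((1−pₐ)/pₐ)·c_fa(v)·P₀(v)` when `0 < π*(v) < 1`,
is at most it when `π*(v) = 0`, and at least it when `π*(v) = 1`. -/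
theorem bne_attacker_first_order {V : Type*} [Fintype V] {m : ℕ}
    (Uu Ud : Fin m → V → ℝ)
    (cfa : V → ℝ) (hcfa : ∀ v, 0 ≤ cfa v)
    (P0 : V → ℝ) (hP00 : ∀ v, 0 ≤ P0 v) (hP01 : ∑ v, P0 v = 1)
    (pa : ℝ) (hpa0 : 0 < pa) (hpa1 : pa < 1)
    (p : Fin m → ℝ) (hp0 : ∀ i, 0 ≤ p i) (hp1 : ∑ i, p i = 1)
    (αs : Fin m → V → ℝ) (hαs : IsAttStrat αs)
    (πs : V → ℝ) (hπs : ∀ v, πs v ∈ Set.Icc (0 : ℝ) 1)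
    -- BNE: `π*` maximizes the defender's expected utility against `α*` ...
    (hBNE_D : ∀ π : V → ℝ, (∀ v, π v ∈ Set.Icc (0 : ℝ) 1) →
      ∑ i, p i * UDpi Uu Ud cfa P0 pa αs π i ≤ ∑ i, p i * UDpi Uu Ud cfa P0 pa αs πs i)
    -- ... and `α*` maximizes the attacker's expected utility against `π*`
    (hBNE_A : ∀ α, IsAttStrat α →
      ∑ i, p i * UApi Uu Ud α πs i ≤ ∑ i, p i * UApi Uu Ud αs πs i) :
    ∀ v : V,
      (0 < πs v → πs v < 1 →
        ∑ i, p i * αs i v * (Uu i v + Ud i v) = (1 - pa) / pa * (cfa v * P0 v))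
      ∧ (πs v = 0 →
        ∑ i, p i * αs i v * (Uu i v + Ud i v) ≤ (1 - pa) / pa * (cfa v * P0 v))
      ∧ (πs v = 1 →
        (1 - pa) / pa * (cfa v * P0 v) ≤ ∑ i, p i * αs i v * (Uu i v + Ud i v)) :=
  bne_attacker_first_order_general Uu Ud cfa P0 pa hpa0 p hp1 αs πs hπs hBNE_D
end
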